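/- Let 0 < α₂ < 1/2 and α₁ = 1 − 2α₂, and let ν be the probability measure on ((√2−1)², (√2+1)²) with density √((x − (√2−1)²)((√2+1)² − x))/(2πx) · (α₁ + α₂·x). Define m_k = ∫ x^k dν(x) and the free cumulants κ₂ = m₂ − m₁², κ₃ = m₃ − 3m₁m₂ + 2m₁³, κ₄ = m₄ − 4m₁m₃ − 2m₂² + 10m₁²m₂ − 5m₁⁴. Then the Hankel determinant κ₂κ₄ − κ₃² is strictly negative for every α₂ ∈ (0, 1/2). (Consequently, ν — the law of X^{−1} for X following σ_{α₁,α₂} — is not freely infinitely divisible.) -/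

import Mathlib

/-!
On its support `(3 - √8, 3 + √8)` the measure `ν` has density `(α₁ + α₂ x) / (2π x)` against
`√(8 - (x - 3)²)`, so its moments are `m_{n+1} = (α₁ J_n + α₂ J_{n+1}) / 2π` with
`J_n = ∫ xⁿ √(8 - (x - 3)²) dx`. Each `J_n` is computed exactly from an explicit antiderivative
`P √(8 - (x - 3)²) + c arcsin ((x - 3) / √8)` with `P` a polynomial, which gives
`J_0, …, J_4 = 4π, 12π, 44π, 180π, 788π` and hence `m_k` affine in `α₂`. The Hankel determinant
then factors as `-8 α₂ (1 - 2α₂) ((1 + α₂ - 2α₂²)² - 2α₂²)`, and the last factor is positive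
because `1 + α₂ - 2α₂² = 1 + α₂ (1 - 2α₂) ≥ 1 > 2α₂²`.
-/

open MeasureTheory Set

/-- The probability measure on `((√2-1)², (√2+1)²)` with density
`√((x - (√2-1)²)((√2+1)² - x))/(2πx) · (α₁ + α₂·x)`, where `α₁ = 1 - 2α₂`.
It is the law of `X⁻¹` for `X ~ σ_{α₁,α₂}`. -/
noncomputable def nuMeasure (α₂ : ℝ) : Measure ℝ :=
  MeasureTheory.volume.withDensity
    (fun x => ENNReal.ofReal
      ((Set.Ioo ((Real.sqrt 2 - 1) ^ 2) ((Real.sqrt 2 + 1) ^ 2)).indicator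
        (fun x =>
          Real.sqrt ((x - (Real.sqrt 2 - 1) ^ 2) * ((Real.sqrt 2 + 1) ^ 2 - x)) /
              (2 * Real.pi * x) * ((1 - 2 * α₂) + α₂ * x)) x))

open Real

theorem integral_withDensity_ofReal_indicator_Ioo {a b : ℝ} (hab : a ≤ b) {f : ℝ → ℝ}
    (hf : AEMeasurable f) (hf₀ : ∀ x ∈ Ioo a b, 0 ≤ f x) (g : ℝ → ℝ) :
    ∫ x, g x ∂volume.withDensity (fun x => ENNReal.ofReal ((Ioo a b).indicator f x)) =
      ∫ x in a..b, f x * g x := by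
  rw [integral_withDensity_eq_integral_toReal_smul₀
      (hf.indicator measurableSet_Ioo).ennreal_ofReal (ae_of_all _ fun _ => ENNReal.ofReal_lt_top),
    intervalIntegral.integral_of_le hab, integral_Ioc_eq_integral_Ioo,
    ← integral_indicator measurableSet_Ioo]
  congr 1 with x
  by_cases hx : x ∈ Ioo a b
  · simp [hx, hf₀ x hx]
  · simp [hx]

theorem hasDerivAt_arcsin_sub_div_sqrt {m R x : ℝ} (hx : (x - m) ^ 2 < R) :
    HasDerivAt (fun x => arcsin ((x - m) / √R)) (1 / √(R - (x - m) ^ 2)) x := by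
  have hR : 0 < R := (sq_nonneg _).trans_lt hx
  have hsq : ((x - m) / √R) ^ 2 < 1 := by
    rwa [div_pow, sq_sqrt hR.le, div_lt_one hR]
  have hne : (x - m) / √R ≠ -1 ∧ (x - m) / √R ≠ 1 := by
    constructor <;> rintro h <;> simp [h] at hsq
  refine ((hasDerivAt_arcsin hne.1 hne.2).comp x
    (((hasDerivAt_id x).sub_const m).div_const √R)).congr_deriv ?_
  rw [div_pow, sq_sqrt hR.le, one_sub_div hR.ne', sqrt_div' _ hR.le]
  have : 0 < √R := sqrt_pos.2 hR
  field_simp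

theorem hasDerivAt_sqrt_sub_sq {m R x : ℝ} (hx : (x - m) ^ 2 < R) :
    HasDerivAt (fun x => √(R - (x - m) ^ 2)) (-(x - m) / √(R - (x - m) ^ 2)) x := by
  have hQ : 0 < R - (x - m) ^ 2 := sub_pos.2 hx
  refine ((((hasDerivAt_id x).sub_const m).pow 2).const_sub R).sqrt hQ.ne' |>.congr_deriv ?_
  have : 0 < √(R - (x - m) ^ 2) := sqrt_pos.2 hQ
  simp only [id, Pi.pow_apply]
  field_simp
  ring

/-- If `P' Q - P (x - m) + c = g Q` for `Q = R - (x - m)²`, then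
`P √Q + c arcsin ((x - m) / √R)` is an antiderivative of `g √Q`. -/
theorem integral_mul_sqrt_sub_sq_eq_mul_pi {m R c : ℝ} (hR : 0 < R) {g P P' : ℝ → ℝ}
    (hP : ∀ x, HasDerivAt P (P' x) x) (hg : Continuous g)
    (hPg : ∀ x, P' x * (R - (x - m) ^ 2) - P x * (x - m) + c = g x * (R - (x - m) ^ 2)) :
    ∫ x in (m - √R)..(m + √R), g x * √(R - (x - m) ^ 2) = c * π := by
  have hP_cont : Continuous P := continuous_iff_continuousAt.2 fun x => (hP x).continuousAt
  have hsqrtR : 0 < √R := sqrt_pos.2 hR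
  have hderiv : ∀ x ∈ Ioo (m - √R) (m + √R),
      HasDerivAt (fun x => P x * √(R - (x - m) ^ 2) + c * arcsin ((x - m) / √R))
        (g x * √(R - (x - m) ^ 2)) x := by
    rintro x ⟨hxl, hxr⟩
    have hx : (x - m) ^ 2 < R := by
      nlinarith [mul_pos (sub_pos.2 hxl) (sub_pos.2 hxr), sq_sqrt hR.le]
    have hQ : 0 < √(R - (x - m) ^ 2) := sqrt_pos.2 (sub_pos.2 hx)
    refine (((hP x).mul (hasDerivAt_sqrt_sub_sq hx)).add
      ((hasDerivAt_arcsin_sub_div_sqrt hx).const_mul c)).congr_deriv ?_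
    field_simp
    rw [sq_sqrt (sub_pos.2 hx).le]
    linear_combination hPg x
  rw [intervalIntegral.integral_eq_sub_of_hasDerivAt_of_le (by linarith)
    (by fun_prop) hderiv ((hg.mul (by fun_prop)).intervalIntegrable _ _)]
  have hQ : R - (√R) ^ 2 = 0 := by rw [sq_sqrt hR.le, sub_self]
  have hQa : R - (m - √R - m) ^ 2 = 0 := by rw [sub_sub_cancel_left, neg_sq, hQ]
  have hQb : R - (m + √R - m) ^ 2 = 0 := by rw [add_sub_cancel_left, hQ]
  have ha : (m - √R - m) / √R = -1 := by
    rw [sub_sub_cancel_left, neg_div, div_self hsqrtR.ne']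
  have hb : (m + √R - m) / √R = 1 := by rw [add_sub_cancel_left, div_self hsqrtR.ne']
  simp only [hQa, hQb, ha, hb, sqrt_zero, mul_zero, zero_add, arcsin_one, arcsin_neg_one]
  ring

noncomputable def semicircleMoment (n : ℕ) : ℝ :=
  ∫ x in (3 - √8)..(3 + √8), x ^ n * √(8 - (x - 3) ^ 2)

theorem semicircleMoment_eq_of_certificate {n : ℕ} (a₀ a₁ a₂ a₃ a₄ a₅ c : ℝ)
    (h : ∀ x : ℝ, (a₁ + 2 * a₂ * x + 3 * a₃ * x ^ 2 + 4 * a₄ * x ^ 3 + 5 * a₅ * x ^ 4) *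
        (8 - (x - 3) ^ 2) - (a₀ + a₁ * x + a₂ * x ^ 2 + a₃ * x ^ 3 + a₄ * x ^ 4 + a₅ * x ^ 5) *
        (x - 3) + c = x ^ n * (8 - (x - 3) ^ 2)) :
    semicircleMoment n = c * π := by
  refine integral_mul_sqrt_sub_sq_eq_mul_pi (by norm_num) (fun x => ?_) (continuous_pow n) h
  refine ((((((hasDerivAt_id x).const_mul a₁).const_add a₀).add
    ((hasDerivAt_pow 2 x).const_mul a₂)).add ((hasDerivAt_pow 3 x).const_mul a₃)).add
    ((hasDerivAt_pow 4 x).const_mul a₄) |>.add ((hasDerivAt_pow 5 x).const_mul a₅)).congr_deriv ?_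
  ring

theorem semicircleMoment_zero : semicircleMoment 0 = 4 * π :=
  semicircleMoment_eq_of_certificate (-3/2) (1/2) 0 0 0 0 4 fun x => by ring

theorem semicircleMoment_one : semicircleMoment 1 = 12 * π :=
  semicircleMoment_eq_of_certificate (-25/6) (-1/2) (1/3) 0 0 0 12 fun x => by ring

theorem semicircleMoment_two : semicircleMoment 2 = 44 * π :=
  semicircleMoment_eq_of_certificate (-61/4) (-7/4) (-1/4) (1/4) 0 0 44 fun x => by ring

theorem semicircleMoment_three : semicircleMoment 3 = 180 * π :=
  semicircleMoment_eq_of_certificate (-3743/60) (-143/20) (-59/60) (-3/20) (1/5) 0 180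
    fun x => by ring

theorem semicircleMoment_four : semicircleMoment 4 = 788 * π :=
  semicircleMoment_eq_of_certificate (-2731/10) (-313/10) (-43/10) (-19/30) (-1/10) (1/6) 788
    fun x => by ring

theorem sqrt_eight : √8 = 2 * √2 := by
  rw [show (8 : ℝ) = 2 ^ 2 * 2 by norm_num, sqrt_mul' _ zero_le_two, sqrt_sq zero_le_two]

theorem sqrt_two_sub_one_sq : (√2 - 1) ^ 2 = 3 - √8 := by
  rw [sqrt_eight]; linear_combination sq_sqrt (zero_le_two : (0 : ℝ) ≤ 2)

theorem sqrt_two_add_one_sq : (√2 + 1) ^ 2 = 3 + √8 := by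
  rw [sqrt_eight]; linear_combination sq_sqrt (zero_le_two : (0 : ℝ) ≤ 2)

theorem integral_pow_succ_nuMeasure {α₂ : ℝ} (h₀ : 0 ≤ α₂) (h₁ : α₂ ≤ 1 / 2) {n : ℕ} {j j' : ℝ}
    (hj : semicircleMoment n = j * π) (hj' : semicircleMoment (n + 1) = j' * π) :
    ∫ x, x ^ (n + 1) ∂nuMeasure α₂ = ((1 - 2 * α₂) * j + α₂ * j') / 2 := by
  suffices ∫ x, x ^ (n + 1) ∂nuMeasure α₂ =
      ((1 - 2 * α₂) * semicircleMoment n + α₂ * semicircleMoment (n + 1)) / (2 * π) by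
    rw [this, hj, hj']
    field_simp
  have h8 : √8 ^ 2 = 8 := sq_sqrt (by norm_num)
  have hlo : 0 < 3 - √8 := by nlinarith [sqrt_nonneg 8]
  have hab : 3 - √8 ≤ 3 + √8 := by linarith [sqrt_nonneg 8]
  have hQ : ∀ x, (x - (3 - √8)) * (3 + √8 - x) = 8 - (x - 3) ^ 2 := fun x => by
    linear_combination h8
  rw [nuMeasure, sqrt_two_sub_one_sq, sqrt_two_add_one_sq,
    integral_withDensity_ofReal_indicator_Ioo hab (by fun_prop) ?nonneg,
    semicircleMoment, semicircleMoment, ← intervalIntegral.integral_const_mul,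
    ← intervalIntegral.integral_const_mul, ← intervalIntegral.integral_add,
    ← intervalIntegral.integral_div]
  · refine intervalIntegral.integral_congr fun x hx => ?_
    have hx : 0 < x := hlo.trans_le (uIcc_of_le hab ▸ hx).1
    simp only [hQ]
    field_simp
    ring
  case hf | hg => exact Continuous.intervalIntegrable (by fun_prop) _ _
  case nonneg =>
    intro x hx
    have hx : 0 < x := hlo.trans hx.1
    have : 0 ≤ 1 - 2 * α₂ + α₂ * x := by nlinarith
    positivity

/-- For `0 < α₂ < 1/2` and `α₁ = 1 - 2α₂`, the Hankel determinant `κ₂κ₄ - κ₃²` of the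
free cumulants of `ν` (computed from the moments via the moment-cumulant formulas)
is strictly negative. -/
theorem nu_hankel_neg (α₂ : ℝ) (h0 : 0 < α₂) (h12 : α₂ < 1 / 2)
    (m₁ m₂ m₃ m₄ κ₂ κ₃ κ₄ : ℝ)
    (hm₁ : m₁ = ∫ x : ℝ, x ∂(nuMeasure α₂))
    (hm₂ : m₂ = ∫ x : ℝ, x ^ 2 ∂(nuMeasure α₂))
    (hm₃ : m₃ = ∫ x : ℝ, x ^ 3 ∂(nuMeasure α₂))
    (hm₄ : m₄ = ∫ x : ℝ, x ^ 4 ∂(nuMeasure α₂))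
    (hκ₂ : κ₂ = m₂ - m₁ ^ 2)
    (hκ₃ : κ₃ = m₃ - 3 * m₁ * m₂ + 2 * m₁ ^ 3)
    (hκ₄ : κ₄ = m₄ - 4 * m₁ * m₃ - 2 * m₂ ^ 2 + 10 * m₁ ^ 2 * m₂ - 5 * m₁ ^ 4) :
    κ₂ * κ₄ - κ₃ ^ 2 < 0 := by
  have moment := @integral_pow_succ_nuMeasure α₂ h0.le h12.le
  have e₁ : m₁ = 2 + 2 * α₂ := by
    have h := moment semicircleMoment_zero semicircleMoment_one
    simp only [zero_add, pow_one] at h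
    rw [hm₁, h]; ring
  have e₂ : m₂ = 6 + 10 * α₂ := by
    rw [hm₂, moment semicircleMoment_one semicircleMoment_two]; ring
  have e₃ : m₃ = 22 + 46 * α₂ := by
    rw [hm₃, moment semicircleMoment_two semicircleMoment_three]; ring
  have e₄ : m₄ = 90 + 214 * α₂ := by
    rw [hm₄, moment semicircleMoment_three semicircleMoment_four]; ring
  subst hκ₂ hκ₃ hκ₄ e₁ e₂ e₃ e₄
  have hα : 0 < α₂ * (1 - 2 * α₂) := mul_pos h0 (by linarith)
  have hq : 0 < (1 + α₂ - 2 * α₂ ^ 2) ^ 2 - 2 * α₂ ^ 2 := by nlinarith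
  linear_combination 8 * mul_pos hα hq
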